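/- arXiv:math/9906192 — 2 statements merged into one kernel-verified Lean document; each statement's English description precedes it below -/
import Mathlib

section
/- Let g : (-∞,0] → ℝ be convex with g(0) finite, extended by g(x) = ∞ for x > 0, and let u₀(y) = c + y for a constant c (i.e., u₀(y) = c + y for y ≤ 0 and u₀(y) = ∞ for y > 0). Assume g(y) ≥ g(x) + (y-x) for all x ≤ y ≤ 0 (slope at least 1). Then the Hopf-Lax evolution u(x,t) = inf_{y ≥ x, y ≤ 0} (u₀(y) + t·g((x-y)/t)) equals c + t·g(x/t) for all x ≤ 0, t > 0. -/
/-- for `g` convex on `(-∞,0]` with slope everywhere at least `1`,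
and wedge initial data `u₀(y) = c + y` for `y ≤ 0` (`+∞` for `y > 0`), the
Hopf–Lax evolution `u(x,t) = inf_{x ≤ y ≤ 0} (u₀(y) + t·g((x-y)/t))` equals
`c + t·g(x/t)` for all `x ≤ 0`, `t > 0`. -/
theorem stmt7 (g : ℝ → ℝ) (c : ℝ)
    (hconv : ConvexOn ℝ (Set.Iic (0 : ℝ)) g)
    (hslope : ∀ x y : ℝ, x ≤ y → y ≤ 0 → y - x ≤ g y - g x) :
    ∀ x t : ℝ, x ≤ 0 → 0 < t →
      sInf {z : ℝ | ∃ y : ℝ, x ≤ y ∧ y ≤ 0 ∧ z = (c + y) + t * g ((x - y) / t)}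
        = c + t * g (x / t) := by
  intro x t hx ht
  have hmem : (c + t * g (x / t)) ∈
      {z : ℝ | ∃ y : ℝ, x ≤ y ∧ y ≤ 0 ∧ z = (c + y) + t * g ((x - y) / t)} := by
    exact ⟨0, hx, le_refl 0, by ring_nf⟩
  have hlb : ∀ z ∈ {z : ℝ | ∃ y : ℝ, x ≤ y ∧ y ≤ 0 ∧ z = (c + y) + t * g ((x - y) / t)},
      c + t * g (x / t) ≤ z := by
    rintro z ⟨y, hxy, hy0, rfl⟩
    have h1 : x / t ≤ (x - y) / t := by
      gcongr
      linarith
    have h2 : (x - y) / t ≤ 0 := div_nonpos_of_nonpos_of_nonneg (by linarith) ht.le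
    have hs := hslope (x / t) ((x - y) / t) h1 h2
    have hkey : (x - y) / t - x / t = -y / t := by ring
    rw [hkey] at hs
    have : -y ≤ t * g ((x - y) / t) - t * g (x / t) := by
      have := mul_le_mul_of_nonneg_left hs ht.le
      rw [mul_div_cancel₀ _ ht.ne', mul_sub] at this
      linarith
    linarith
  exact le_antisymm (csInf_le ⟨_, hlb⟩ hmem) (le_csInf ⟨_, hmem⟩ hlb)
end

section
/- Deterministic coupling identity (single step): Let σ : ℤ → ℤ ∪ {∞} satisfy the exclusion condition, and for each j with σ(j) finite define ζ^j(i) = σ(j) + i for i ≤ 0 and ζ^j(i) = ∞ for i > 0. Suppose σ(i) = inf_{j ≥ i} ζ^j(i−j) holds for all i. Apply simultaneously to σ the jump T_{i₀,k} at index i₀ and to each ζ^j the jump T_{i₀−j,k}. Then the identity σ'(i) = inf_{j ≥ i} (ζ^j)'(i−j) still holds for all i, where primes denote post-jump states. -/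
/-- single-step coupling identity: if `σ(i) = inf_{j ≥ i} ζ^j(i−j)`
(as an attained infimum) holds before the jump, and we apply the jump `T_{i₀,k}`
to `σ` while each `ζ^j` receives the jump at translated index `i₀ − j`, then the
identity still holds after the jump. -/
theorem stmt13 (σ : ℤ → WithTop ℤ) (ζ : ℤ → ℤ → WithTop ℤ)
    (hexcl : ∀ j : ℤ, σ j + 1 ≤ σ (j + 1))
    (hζ0 : ∀ j i : ℤ, ζ j i = if i ≤ 0 then σ j + ((i : ℤ) : WithTop ℤ) else ⊤)
    (hcoup : ∀ i : ℤ, IsLeast {x : WithTop ℤ | ∃ j : ℤ, i ≤ j ∧ x = ζ j (i - j)} (σ i))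
    (i₀ : ℤ) (k : ℤ) (hk : 1 ≤ k)
    (σ' : ℤ → WithTop ℤ) (ζ' : ℤ → ℤ → WithTop ℤ)
    (hσ' : σ' = Function.update σ i₀
      (min (σ i₀ + (k : WithTop ℤ)) (σ (i₀ + 1) + ((-1 : ℤ) : WithTop ℤ))))
    (hζ' : ∀ j : ℤ, ζ' j = Function.update (ζ j) (i₀ - j)
      (min (ζ j (i₀ - j) + (k : WithTop ℤ)) (ζ j (i₀ - j + 1) + ((-1 : ℤ) : WithTop ℤ)))) :
    ∀ i : ℤ, IsLeast {x : WithTop ℤ | ∃ j : ℤ, i ≤ j ∧ x = ζ' j (i - j)} (σ' i) := by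
  have hζval : ∀ j i : ℤ, i ≤ 0 → ζ j i = σ j + ((i : ℤ) : WithTop ℤ) := by
    intro j i h; rw [hζ0]; simp [h]
  have hζtop : ∀ j i : ℤ, 0 < i → ζ j i = ⊤ := by
    intro j i h; rw [hζ0]; simp [not_le.mpr h]
  have hlow : ∀ i j : ℤ, i ≤ j → σ i ≤ σ j + ((i - j : ℤ) : WithTop ℤ) := by
    intro i j hij
    have := (hcoup i).2 ⟨j, hij, rfl⟩
    rwa [hζval j (i - j) (by omega)] at this
  have hknn : (0 : WithTop ℤ) ≤ (k : WithTop ℤ) := by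
    exact_mod_cast (by omega : (0:ℤ) ≤ k)
  have hvalA : ζ' i₀ (i₀ - i₀) = σ i₀ + (k : WithTop ℤ) := by
    rw [hζ' i₀, Function.update_self, hζval i₀ (i₀ - i₀) (by omega),
      hζtop i₀ (i₀ - i₀ + 1) (by omega), top_add, min_eq_left le_top]
    simp
  have hval' : ∀ j : ℤ, i₀ + 1 ≤ j →
      ζ' j (i₀ - j) = σ j + ((i₀ - j : ℤ) : WithTop ℤ) := by
    intro j hj
    rw [hζ' j, Function.update_self, hζval j (i₀ - j) (by omega),
      hζval j (i₀ - j + 1) (by omega)]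
    have h1 : σ j + ((i₀ - j + 1 : ℤ) : WithTop ℤ) + ((-1 : ℤ) : WithTop ℤ)
        = σ j + ((i₀ - j : ℤ) : WithTop ℤ) := by
      rw [add_assoc, ← WithTop.coe_add]
      norm_num
    rw [h1]
    exact min_eq_right (le_add_of_nonneg_right hknn)
  intro i
  rcases eq_or_ne i i₀ with hi | hi
  · subst hi
    rw [hσ', Function.update_self]
    set A := σ i + (k : WithTop ℤ) with hA
    set B := σ (i + 1) + ((-1 : ℤ) : WithTop ℤ) with hB
    constructor
    · rcases le_total A B with h | h
      · exact ⟨i, le_refl i, by rw [min_eq_left h, hvalA]⟩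
      · refine ⟨i + 1, by omega, ?_⟩
        rw [min_eq_right h, hval' (i+1) (by omega), hB]
        norm_num
    · rintro x ⟨j, hj, rfl⟩
      rcases eq_or_lt_of_le hj with hji | hji
      · rw [← hji, hvalA]
        exact min_le_left _ _
      · rw [hval' j (by omega)]
        refine (min_le_right A B).trans ?_
        have h2 : σ (i + 1) ≤ σ j + ((i + 1 - j : ℤ) : WithTop ℤ) := hlow (i+1) j (by omega)
        have h3 : B ≤ σ j + ((i + 1 - j : ℤ) : WithTop ℤ) + ((-1 : ℤ) : WithTop ℤ) :=
          add_le_add_left h2 _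
        refine h3.trans_eq ?_
        rw [add_assoc, ← WithTop.coe_add]
        congr 2
        omega
  · have hset : {x : WithTop ℤ | ∃ j : ℤ, i ≤ j ∧ x = ζ' j (i - j)}
        = {x : WithTop ℤ | ∃ j : ℤ, i ≤ j ∧ x = ζ j (i - j)} := by
      ext x
      constructor
      · rintro ⟨j, hj, rfl⟩
        exact ⟨j, hj, by rw [hζ' j, Function.update_of_ne (by omega)]⟩
      · rintro ⟨j, hj, rfl⟩
        exact ⟨j, hj, by rw [hζ' j, Function.update_of_ne (by omega)]⟩
    rw [hσ', Function.update_of_ne hi, hset]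
    exact hcoup i
end
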